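/- arXiv:1301.3625 — 2 statements merged into one kernel-verified Lean document; each statement's English description precedes it below -/
import Mathlib

section
/- Let l ≥ 3 be an odd integer, ζ = exp(2πi/l) ∈ ℂ, and k = (l+1)/2. Suppose I₁, …, I_k are nonzero complex numbers and J₁, …, J_k are complex numbers such that for every p the quotient J_p / I_p lies in i·ℝ_{>0} (i.e., is purely imaginary with positive imaginary part). Let N be the k × k matrix with entries N_{p,q} = (ζ^{pq} − ζ^{−pq}) I_p for 1 ≤ q ≤ k−1 and N_{p,k} = J_p. Then det N ≠ 0. -/
/-!
Dividing row `p` by `I_p` leaves a matrix whose first `k - 1` columns are `ζ^{pq} - ζ^{-pq}` and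
whose last column is `c_p = J_p / I_p ∈ i·ℝ_{>0}`. Since `(k - 1) + k = l`, rows `k - 1` and `k` of
the first part are opposite, so adding row `k - 1` to row `k` and expanding along it gives
`det = (c_{k-1} + c_k) · det S` with `S = (ζ^{pq} - ζ^{-pq})_{1 ≤ p, q ≤ k-1}`, where
`c_{k-1} + c_k ≠ 0`.
Finally `S² = -l · 1`: the summand of `(S²)_{ab}` is invariant under `p ↦ l - p` and vanishes at
`p = 0`, so the sum over `1 ≤ p ≤ k - 1` is half the sum over `ℤ/l`, which the orthogonality of
the characters `p ↦ ζ^{pj}` evaluates.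
-/

open Finset Matrix

theorem pow_mul_eq_inv_pow_mul {G : Type*} [DivisionMonoid G] {ζ : G} {l a b : ℕ}
    (h : ζ ^ l = 1) (hab : a + b = l) (n : ℕ) : ζ ^ (a * n) = ζ⁻¹ ^ (b * n) := by
  rw [inv_pow]
  refine eq_inv_of_mul_eq_one_left ?_
  rw [← pow_add, ← add_mul, hab, pow_mul, h, one_pow]

theorem Finset.sum_range_two_mul_add_one_of_reflect {M : Type*} [AddCommMonoid M] (f : ℕ → M)
    (m : ℕ) (h0 : f 0 = 0) (hf : ∀ n ≤ 2 * m + 1, f (2 * m + 1 - n) = f n) :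
    ∑ n ∈ range (2 * m + 1), f n = 2 • ∑ n ∈ range m, f (n + 1) := by
  rw [sum_range_succ', h0, add_zero, two_mul, sum_range_add, two_nsmul,
    ← sum_range_reflect (fun n ↦ f (m + n + 1))]
  congr 1
  refine sum_congr rfl fun n hn ↦ ?_
  rw [mem_range] at hn
  rw [← hf (n + 1) (by omega)]
  congr 1
  omega

theorem sum_range_pow_eq_zero_of_pow_eq_one {K : Type*} [Field K] {w : K} {l : ℕ}
    (h : w ^ l = 1) (hw : w ≠ 1) : ∑ n ∈ range l, w ^ n = 0 := by
  have := geom_sum_mul w l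
  rw [h, sub_self, mul_eq_zero] at this
  exact this.resolve_right (sub_ne_zero.mpr hw)

section

variable {K : Type*} [Field K] {ζ : K} {l : ℕ}

theorem IsPrimitiveRoot.sum_range_sine_mul_sine (hζ : IsPrimitiveRoot ζ l) {a b : ℕ}
    (ha : 0 < a) (hb : 0 < b) (hab : a + b < l) :
    ∑ n ∈ range l, (ζ ^ (n * a) - ζ⁻¹ ^ (n * a)) * (ζ ^ (n * b) - ζ⁻¹ ^ (n * b)) =
      if a = b then -2 * (l : K) else 0 := by
  set x := ζ ^ a
  set y := ζ ^ b
  have hx0 : x ≠ 0 := pow_ne_zero _ (hζ.ne_zero (by omega))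
  have hy0 : y ≠ 0 := pow_ne_zero _ (hζ.ne_zero (by omega))
  have hxl : x ^ l = 1 := by rw [← pow_mul, mul_comm, pow_mul, hζ.pow_eq_one, one_pow]
  have hyl : y ^ l = 1 := by rw [← pow_mul, mul_comm, pow_mul, hζ.pow_eq_one, one_pow]
  have hxy : x * y ≠ 1 := by rw [← pow_add]; exact hζ.pow_ne_one_of_pos_of_lt (by omega) hab
  have expand : ∀ n, (ζ ^ (n * a) - ζ⁻¹ ^ (n * a)) * (ζ ^ (n * b) - ζ⁻¹ ^ (n * b)) =
      (x * y) ^ n + ((x * y)⁻¹) ^ n - (x * y⁻¹) ^ n - (y * x⁻¹) ^ n := by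
    intro n
    simp only [x, y, mul_pow, inv_pow, ← pow_mul, mul_comm n]
    ring
  simp only [expand, sum_add_distrib, sum_sub_distrib]
  rw [sum_range_pow_eq_zero_of_pow_eq_one (by simp [mul_pow, hxl, hyl]) hxy,
    sum_range_pow_eq_zero_of_pow_eq_one (by simp [inv_pow, mul_pow, hxl, hyl]) (inv_ne_one.mpr hxy)]
  split_ifs with h
  · have hxy : x = y := by simp only [x, y, h]
    rw [hxy, mul_inv_cancel₀ hy0]
    simp only [one_pow, sum_const, card_range, nsmul_eq_mul, mul_one]
    ring
  · have hxy : x ≠ y := fun hxy ↦ h (hζ.pow_inj (by omega) (by omega) hxy)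
    rw [sum_range_pow_eq_zero_of_pow_eq_one (by simp [mul_pow, inv_pow, hxl, hyl])
        (by rwa [Ne, mul_inv_eq_one₀ hy0]),
      sum_range_pow_eq_zero_of_pow_eq_one (by simp [mul_pow, inv_pow, hxl, hyl])
        (by rwa [Ne, mul_inv_eq_one₀ hx0, eq_comm])]
    simp

theorem IsPrimitiveRoot.sum_range_half_sine_mul_sine [CharZero K] {m : ℕ}
    (hζ : IsPrimitiveRoot ζ (2 * m + 1)) {a b : ℕ} (ha : 0 < a) (ha' : a ≤ m) (hb : 0 < b)
    (hb' : b ≤ m) :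
    ∑ n ∈ range m, (ζ ^ ((n + 1) * a) - ζ⁻¹ ^ ((n + 1) * a)) *
        (ζ ^ ((n + 1) * b) - ζ⁻¹ ^ ((n + 1) * b)) =
      if a = b then -(2 * m + 1 : K) else 0 := by
  set f : ℕ → K := fun n ↦ (ζ ^ (n * a) - ζ⁻¹ ^ (n * a)) * (ζ ^ (n * b) - ζ⁻¹ ^ (n * b))
  have hζ' : ζ⁻¹ ^ (2 * m + 1) = 1 := by rw [inv_pow, hζ.pow_eq_one, inv_one]
  have hreflect : ∀ n ≤ 2 * m + 1, f (2 * m + 1 - n) = f n := by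
    intro n hn
    have hsum : 2 * m + 1 - n + n = 2 * m + 1 := by omega
    simp only [f, pow_mul_eq_inv_pow_mul hζ.pow_eq_one hsum,
      pow_mul_eq_inv_pow_mul hζ' hsum, inv_inv]
    ring
  have h2 := sum_range_two_mul_add_one_of_reflect f m (by simp [f]) hreflect
  rw [hζ.sum_range_sine_mul_sine ha hb (by omega)] at h2
  show ∑ n ∈ range m, f (n + 1) = _
  rw [two_nsmul] at h2
  split_ifs at h2 ⊢
  · push_cast at h2
    linear_combination (-1 / 2 : K) * h2
  · linear_combination (-1 / 2 : K) * h2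

/-- For `ζ = exp (2πi/l)` the entries are `2i sin (2π p q / l)`; `Fin m` indexes `1, …, m`. -/
def sineMatrix (ζ : K) (m : ℕ) : Matrix (Fin m) (Fin m) K :=
  of fun p q ↦ ζ ^ (((p : ℕ) + 1) * ((q : ℕ) + 1)) - ζ⁻¹ ^ (((p : ℕ) + 1) * ((q : ℕ) + 1))

theorem IsPrimitiveRoot.sineMatrix_mul_self [CharZero K] {m : ℕ}
    (hζ : IsPrimitiveRoot ζ (2 * m + 1)) :
    sineMatrix ζ m * sineMatrix ζ m = (-(2 * m + 1 : K)) • 1 := by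
  ext a b
  have hsum := hζ.sum_range_half_sine_mul_sine (a := a + 1) (b := b + 1) (by omega) a.isLt
    (by omega) b.isLt
  rw [← Fin.sum_univ_eq_sum_range (fun n ↦ (ζ ^ ((n + 1) * (a + 1)) - ζ⁻¹ ^ ((n + 1) * (a + 1))) *
        (ζ ^ ((n + 1) * (b + 1)) - ζ⁻¹ ^ ((n + 1) * (b + 1))))] at hsum
  simp only [add_left_inj, ← Fin.ext_iff] at hsum
  simp only [mul_apply, sineMatrix, of_apply, Matrix.smul_apply, one_apply, smul_eq_mul, mul_ite,
    mul_one, mul_zero, ← hsum]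
  exact sum_congr rfl fun j _ ↦ by rw [mul_comm ((a : ℕ) + 1)]

theorem IsPrimitiveRoot.det_sineMatrix_ne_zero [CharZero K] {m : ℕ}
    (hζ : IsPrimitiveRoot ζ (2 * m + 1)) : (sineMatrix ζ m).det ≠ 0 := by
  have hsq : (sineMatrix ζ m).det ^ 2 = (-(2 * m + 1 : K)) ^ m := by
    rw [sq, ← det_mul, hζ.sineMatrix_mul_self, det_smul, det_one, mul_one, Fintype.card_fin]
  have hl : (2 * m + 1 : K) ≠ 0 := by exact_mod_cast (2 * m).succ_ne_zero
  intro h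
  rw [h, zero_pow two_ne_zero] at hsq
  exact pow_ne_zero m (neg_ne_zero.mpr hl) hsq.symm

theorem Matrix.det_eq_of_row_last_add_row_eq_zero {R : Type*} [CommRing R] {m : ℕ}
    (A : Matrix (Fin (m + 1)) (Fin (m + 1)) R) (i : Fin m)
    (h : ∀ j : Fin m, A (Fin.last m) j.castSucc + A i.castSucc j.castSucc = 0) :
    A.det = (A (Fin.last m) (Fin.last m) + A i.castSucc (Fin.last m)) *
      (A.submatrix Fin.castSucc Fin.castSucc).det := by
  rw [← det_updateRow_add_self A (Fin.castSucc_lt_last i).ne', det_succ_row _ (Fin.last m),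
    Fin.sum_univ_castSucc]
  have hsub := submatrix_updateRow_succAbove A (A (Fin.last m) + A i.castSucc) Fin.castSucc
    (Fin.last m)
  rw [Fin.succAbove_last] at hsub
  simp [h, Fin.succAbove_last, hsub]

def sineBorderMatrix (ζ : K) (m : ℕ) (c : Fin (m + 1) → K) :
    Matrix (Fin (m + 1)) (Fin (m + 1)) K :=
  of fun p q ↦ if (q : ℕ) < m then
    ζ ^ (((p : ℕ) + 1) * ((q : ℕ) + 1)) - ζ⁻¹ ^ (((p : ℕ) + 1) * ((q : ℕ) + 1)) else c p

theorem det_sineBorderMatrix {n : ℕ} (hζ : ζ ^ (2 * (n + 1) + 1) = 1) (c : Fin (n + 2) → K) :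
    (sineBorderMatrix ζ (n + 1) c).det =
      (c (Fin.last (n + 1)) + c (Fin.last n).castSucc) * (sineMatrix ζ (n + 1)).det := by
  have hζ' : ζ⁻¹ ^ (2 * (n + 1) + 1) = 1 := by rw [inv_pow, hζ, inv_one]
  have hsum : n + 1 + 1 + (n + 1) = 2 * (n + 1) + 1 := by ring
  have hsub : (sineBorderMatrix ζ (n + 1) c).submatrix Fin.castSucc Fin.castSucc =
      sineMatrix ζ (n + 1) := by
    ext p q
    simp only [sineBorderMatrix, sineMatrix, submatrix_apply, of_apply, Fin.val_castSucc, q.isLt,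
      if_true]
  rw [det_eq_of_row_last_add_row_eq_zero _ (Fin.last n), hsub]
  · simp only [sineBorderMatrix, of_apply, Fin.val_last, lt_irrefl, if_false]
  · intro j
    simp only [sineBorderMatrix, of_apply, Fin.val_castSucc, Fin.val_last, j.isLt, if_true,
      pow_mul_eq_inv_pow_mul hζ hsum, pow_mul_eq_inv_pow_mul hζ' hsum, inv_inv]
    ring

end

/-- Let `l ≥ 3` be odd, `ζ = exp(2πi/l)`, `k = (l+1)/2`.  Suppose `I₁, …, I_k` are nonzero
complex numbers and `J₁, …, J_k` are complex numbers with `J_p / I_p ∈ i·ℝ_{>0}` for every `p`.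
Then the `k × k` matrix with entries `(ζ^{pq} - ζ^{-pq}) I_p` for `1 ≤ q ≤ k-1` and last
column `J_p` has nonzero determinant. -/
theorem det_ne_zero_of_quot_purely_imaginary (l : ℕ) (hl : 3 ≤ l) (hodd : Odd l)
    (k : ℕ) (hk : k = (l + 1) / 2)
    (ζ : ℂ) (hζ : ζ = Complex.exp (2 * Real.pi * Complex.I / l))
    (I J : ℕ → ℂ)
    (hI : ∀ p, 1 ≤ p → p ≤ k → I p ≠ 0)
    (hJI : ∀ p, 1 ≤ p → p ≤ k → ∃ r : ℝ, 0 < r ∧ J p / I p = Complex.I * r)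
    (N : Matrix (Fin k) (Fin k) ℂ)
    (hN : ∀ p q : Fin k, N p q =
      if q.1 + 1 ≤ k - 1 then
        (ζ ^ ((p.1 + 1) * (q.1 + 1)) - ζ⁻¹ ^ ((p.1 + 1) * (q.1 + 1))) * I (p.1 + 1)
      else J (p.1 + 1)) :
    N.det ≠ 0 := by
  obtain ⟨m, rfl⟩ := hodd
  obtain ⟨n, rfl⟩ : ∃ n, m = n + 1 := ⟨m - 1, by omega⟩
  obtain rfl : k = n + 2 := by omega
  have hζ' : IsPrimitiveRoot ζ (2 * (n + 1) + 1) := hζ ▸ Complex.isPrimitiveRoot_exp _ (by omega)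
  set c : Fin (n + 2) → ℂ := fun p ↦ J (p + 1) / I (p + 1)
  have hNc : N = of fun p q : Fin (n + 2) ↦ I (p + 1) * sineBorderMatrix ζ (n + 1) c p q := by
    ext p q
    have hIp := hI (p + 1) (by omega) (by omega)
    rw [hN, show n + 2 - 1 = n + 1 from rfl]
    simp only [sineBorderMatrix, of_apply, c, Nat.add_one_le_iff]
    split_ifs
    · ring
    · exact (mul_div_cancel₀ _ hIp).symm
  rw [hNc, det_mul_column, det_sineBorderMatrix hζ'.pow_eq_one]
  refine mul_ne_zero (prod_ne_zero_iff.mpr fun p _ ↦ hI _ (by omega) (by omega))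
    (mul_ne_zero ?_ hζ'.det_sineMatrix_ne_zero)
  obtain ⟨r, hr, hJIr⟩ := hJI (n + 1 + 1) (by omega) le_rfl
  obtain ⟨s, hs, hJIs⟩ := hJI (n + 1) (by omega) (by omega)
  have hc : c (Fin.last (n + 1)) + c (Fin.last n).castSucc = Complex.I * ↑(r + s) := by
    simp only [c, Fin.val_last, Fin.val_castSucc, hJIr, hJIs]
    push_cast
    ring
  rw [hc]
  exact mul_ne_zero Complex.I_ne_zero (Complex.ofReal_ne_zero.mpr (by positivity))
end

section
/- Let l ≥ 1 and j ≥ 1 be integers. For t ∈ (0,1) let r₁(t) < r₂(t) < r₃(t) denote the three real roots of q_t(x) = x³ + 9x² + 24tˡx + 16t^{2l}. Then: (i) for each t ∈ (0,1) the improper integral Q(t) = ∫_{r₂(t)}^{r₃(t)} dx/√(−q_t(x)) converges to a positive real number; (ii) the function t ↦ t^{j−1}·Q(t) is integrable on (0,1); and (iii) ∫₀¹ t^{j−1} Q(t) dt is a positive real number. -/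
/-!
The roots satisfy `r₁ < -4 < -3 - tˡ < r₂ < r₃ < 0`, as the signs of `q_t` at `-4`, `-3 - tˡ` and
`-4tˡ/3` show. On `(r₂, r₃)` the factor `x - r₁` exceeds `r₂ - r₁ > 1 - t`, and
`1/√(uv) ≤ (1/√u + 1/√v)/√(u + v)` bounds the rest of the integrand by integrable inverse square
roots; hence `0 < Q(t) ≤ 4/√(1 - t)`, an integrable majorant on `(0, 1)`. `Q` is measurable because
it is also the integral over the fixed interval `(-4, 0)`, outside `(r₂, r₃)` of which the
integrand vanishes (`√` of a negative number is `0`).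
-/

open MeasureTheory Set intervalIntegral

theorem cubic_eq_mul_sub_of_roots {R : Type*} [CommRing R] [NoZeroDivisors R] {p q r a b c : R}
    (hab : a ≠ b) (hac : a ≠ c) (hbc : b ≠ c)
    (ha : a ^ 3 + p * a ^ 2 + q * a + r = 0) (hb : b ^ 3 + p * b ^ 2 + q * b + r = 0)
    (hc : c ^ 3 + p * c ^ 2 + q * c + r = 0) (x : R) :
    x ^ 3 + p * x ^ 2 + q * x + r = (x - a) * (x - b) * (x - c) := by
  have hab' : a ^ 2 + a * b + b ^ 2 + p * (a + b) + q = 0 :=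
    (mul_eq_zero.mp (by linear_combination ha - hb :
      (a - b) * (a ^ 2 + a * b + b ^ 2 + p * (a + b) + q) = 0)).resolve_left (sub_ne_zero.2 hab)
  have hac' : a ^ 2 + a * c + c ^ 2 + p * (a + c) + q = 0 :=
    (mul_eq_zero.mp (by linear_combination ha - hc :
      (a - c) * (a ^ 2 + a * c + c ^ 2 + p * (a + c) + q) = 0)).resolve_left (sub_ne_zero.2 hac)
  have e₁ : a + b + c + p = 0 :=
    (mul_eq_zero.mp (by linear_combination hab' - hac' :
      (b - c) * (a + b + c + p) = 0)).resolve_left (sub_ne_zero.2 hbc)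
  have e₂ : a * b + a * c + b * c = q := by linear_combination -hab' + (a + b) * e₁
  have e₃ : a * b * c = -r := by linear_combination ha + a * e₂ - a ^ 2 * e₁
  linear_combination x ^ 2 * e₁ - x * e₂ + e₃

theorem mem_Ioo_of_cubic_pos_of_cubic_neg {α : Type*} [CommRing α] [LinearOrder α]
    [IsStrictOrderedRing α] {a b c u v : α} (hab : a < b) (hbc : b < c) (hvu : v < u)
    (hv : 0 < (v - a) * (v - b) * (v - c)) (hu : (u - a) * (u - b) * (u - c) < 0) :
    v ∈ Ioo a b := by
  constructor
  · by_contra! hva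
    nlinarith [mul_nonneg_of_nonpos_of_nonpos (sub_nonpos.2 hva) (sub_nonpos.2 (hva.trans hab.le))]
  · by_contra! hbv
    have huc : u < c := by
      by_contra! hcu
      nlinarith [mul_nonneg (sub_nonneg.2 (hab.trans (hbc.trans_le hcu)).le)
        (sub_nonneg.2 (hbc.le.trans hcu))]
    nlinarith [mul_nonneg (sub_nonneg.2 (hab.le.trans hbv)) (sub_nonneg.2 hbv)]

theorem inv_sqrt_mul_le {u v : ℝ} (hu : 0 < u) (hv : 0 < v) :
    (√(u * v))⁻¹ ≤ ((√u)⁻¹ + (√v)⁻¹) / √(u + v) := by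
  have hsum : √(u + v) ≤ √u + √v := by
    rw [Real.sqrt_le_iff]
    refine ⟨by positivity, ?_⟩
    nlinarith [Real.sq_sqrt hu.le, Real.sq_sqrt hv.le, Real.sqrt_nonneg u, Real.sqrt_nonneg v,
      mul_nonneg (Real.sqrt_nonneg u) (Real.sqrt_nonneg v)]
  have hu' := Real.sqrt_pos.2 hu
  have hv' := Real.sqrt_pos.2 hv
  rw [Real.sqrt_mul hu.le, le_div_iff₀ (Real.sqrt_pos.2 (by positivity)),
    inv_add_inv hu'.ne' hv'.ne', mul_comm, ← div_eq_mul_inv,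
    div_le_div_iff_of_pos_right (by positivity)]
  exact hsum

theorem inv_sqrt_eqOn_rpow : EqOn (fun x : ℝ => (√x)⁻¹) (fun x => x ^ (-(1 / 2) : ℝ)) (Ici 0) :=
  fun x hx => by simp only [Real.sqrt_eq_rpow, Real.rpow_neg (mem_Ici.1 hx)]

theorem intervalIntegrable_inv_sqrt {u : ℝ} (hu : 0 ≤ u) :
    IntervalIntegrable (fun x => (√x)⁻¹) volume 0 u :=
  (intervalIntegrable_congr (inv_sqrt_eqOn_rpow.mono <| by
    rw [uIoc_of_le hu]; exact Ioc_subset_Ioi_self.trans Ioi_subset_Ici_self)).2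
    (intervalIntegrable_rpow' (by norm_num))

theorem integral_inv_sqrt {u : ℝ} (hu : 0 ≤ u) : ∫ x in 0..u, (√x)⁻¹ = 2 * √u := by
  rw [integral_congr (inv_sqrt_eqOn_rpow.mono (by simp [uIcc_of_le hu, Icc_subset_Ici_self])),
    integral_rpow (Or.inl (by norm_num)), Real.zero_rpow (by norm_num), Real.sqrt_eq_rpow]
  norm_num
  ring

section InvSqrt

variable {a b c : ℝ}

theorem intervalIntegrable_inv_sqrt_sub_right (h : b ≤ c) :
    IntervalIntegrable (fun x => (√(x - b))⁻¹) volume b c := by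
  simpa using (intervalIntegrable_inv_sqrt (sub_nonneg.2 h)).comp_sub_right b

theorem integral_inv_sqrt_sub_right (h : b ≤ c) : ∫ x in b..c, (√(x - b))⁻¹ = 2 * √(c - b) := by
  rw [integral_comp_sub_right (fun x => (√x)⁻¹), sub_self, integral_inv_sqrt (sub_nonneg.2 h)]

theorem intervalIntegrable_inv_sqrt_sub_left (h : b ≤ c) :
    IntervalIntegrable (fun x => (√(c - x))⁻¹) volume b c := by
  simpa using ((intervalIntegrable_inv_sqrt (sub_nonneg.2 h)).comp_sub_left c).symm

theorem integral_inv_sqrt_sub_left (h : b ≤ c) : ∫ x in b..c, (√(c - x))⁻¹ = 2 * √(c - b) := by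
  rw [integral_comp_sub_left (fun x => (√x)⁻¹), sub_self, integral_inv_sqrt (sub_nonneg.2 h)]

theorem inv_sqrt_cubic_le {x : ℝ} (hab : a < b) (hx : x ∈ Icc b c) :
    (√((x - a) * (x - b) * (c - x)))⁻¹ ≤
      ((√(x - b))⁻¹ + (√(c - x))⁻¹) / √((b - a) * (c - b)) := by
  rcases hx.1.eq_or_lt with rfl | hbx
  · simp only [sub_self, mul_zero, zero_mul, Real.sqrt_zero, inv_zero]
    positivity
  rcases hx.2.eq_or_lt with rfl | hxc
  · simp only [sub_self, mul_zero, Real.sqrt_zero, inv_zero]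
    positivity
  have hu : 0 < x - b := sub_pos.2 hbx
  have hv : 0 < c - x := sub_pos.2 hxc
  calc (√((x - a) * (x - b) * (c - x)))⁻¹
      ≤ (√((b - a) * ((x - b) * (c - x))))⁻¹ := by
        have hba := sub_pos.2 hab
        refine inv_anti₀ (by positivity) (Real.sqrt_le_sqrt ?_)
        rw [mul_assoc]
        exact mul_le_mul_of_nonneg_right (by linarith) (by positivity)
    _ = (√(b - a))⁻¹ * (√((x - b) * (c - x)))⁻¹ := by
        rw [Real.sqrt_mul (sub_pos.2 hab).le, mul_inv]
    _ ≤ (√(b - a))⁻¹ * (((√(x - b))⁻¹ + (√(c - x))⁻¹) / √((x - b) + (c - x))) := by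
        gcongr
        exact inv_sqrt_mul_le hu hv
    _ = ((√(x - b))⁻¹ + (√(c - x))⁻¹) / √((b - a) * (c - b)) := by
        rw [Real.sqrt_mul (sub_pos.2 hab).le, show x - b + (c - x) = c - b by ring]
        field_simp

theorem intervalIntegrable_inv_sqrt_cubic (hab : a < b) (hbc : b ≤ c) :
    IntervalIntegrable (fun x => (√((x - a) * (x - b) * (c - x)))⁻¹) volume b c := by
  refine IntervalIntegrable.mono_fun'
    (((intervalIntegrable_inv_sqrt_sub_right hbc).add
      (intervalIntegrable_inv_sqrt_sub_left hbc)).div_const (√((b - a) * (c - b))))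
    (by fun_prop) ?_
  rw [uIoc_of_le hbc]
  refine (ae_restrict_iff' measurableSet_Ioc).2 (ae_of_all _ fun x hx => ?_)
  simpa only [Real.norm_of_nonneg (inv_nonneg.2 (Real.sqrt_nonneg _))] using
    inv_sqrt_cubic_le hab (Ioc_subset_Icc_self hx)

theorem integral_inv_sqrt_cubic_pos (hab : a < b) (hbc : b < c) :
    0 < ∫ x in b..c, (√((x - a) * (x - b) * (c - x)))⁻¹ :=
  intervalIntegral_pos_of_pos_on (intervalIntegrable_inv_sqrt_cubic hab hbc.le)
    (fun x hx => by
      have := mul_pos (mul_pos (sub_pos.2 (hab.trans hx.1)) (sub_pos.2 hx.1)) (sub_pos.2 hx.2)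
      positivity) hbc

theorem integral_inv_sqrt_cubic_le (hab : a < b) (hbc : b < c) :
    ∫ x in b..c, (√((x - a) * (x - b) * (c - x)))⁻¹ ≤ 4 / √(b - a) := by
  have hl := intervalIntegrable_inv_sqrt_sub_right hbc.le
  have hr := intervalIntegrable_inv_sqrt_sub_left hbc.le
  calc ∫ x in b..c, (√((x - a) * (x - b) * (c - x)))⁻¹
      ≤ ∫ x in b..c, ((√(x - b))⁻¹ + (√(c - x))⁻¹) / √((b - a) * (c - b)) :=
        integral_mono_on hbc.le (intervalIntegrable_inv_sqrt_cubic hab hbc.le)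
          ((hl.add hr).div_const _) fun x hx => inv_sqrt_cubic_le hab hx
    _ = 4 / √(b - a) := by
        rw [intervalIntegral.integral_div, integral_add hl hr, integral_inv_sqrt_sub_right hbc.le,
          integral_inv_sqrt_sub_left hbc.le, Real.sqrt_mul (sub_pos.2 hab).le]
        have := Real.sqrt_pos.2 (sub_pos.2 hbc)
        field_simp
        ring

end InvSqrt

-- The paper's `q_t(x) = x³ + (3x + 4tˡ)²`, with `s = tˡ`.
def fiberCubic (s x : ℝ) : ℝ := x ^ 3 + 9 * x ^ 2 + 24 * s * x + 16 * s ^ 2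

noncomputable def fiberIntegrand (s x : ℝ) : ℝ := 1 / √(-fiberCubic s x)

structure IsFiberRootTriple (s a b c : ℝ) : Prop where
  lt₁₂ : a < b
  lt₂₃ : b < c
  root₁ : fiberCubic s a = 0
  root₂ : fiberCubic s b = 0
  root₃ : fiberCubic s c = 0

namespace IsFiberRootTriple

variable {s a b c : ℝ}

theorem fiberCubic_eq (h : IsFiberRootTriple s a b c) (x : ℝ) :
    fiberCubic s x = (x - a) * (x - b) * (x - c) :=
  cubic_eq_mul_sub_of_roots h.lt₁₂.ne (h.lt₁₂.trans h.lt₂₃).ne h.lt₂₃.ne h.root₁ h.root₂ h.root₃ x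

theorem mem_Ioo_of_fiberCubic_pos (h : IsFiberRootTriple s a b c) (hs : 0 < s) {v : ℝ}
    (hv : v < -4 * s / 3) (hqv : 0 < fiberCubic s v) : v ∈ Ioo a b := by
  -- `fiberCubic s (-4s/3) = -64s³/27 < 0`
  refine mem_Ioo_of_cubic_pos_of_cubic_neg h.lt₁₂ h.lt₂₃ hv (h.fiberCubic_eq v ▸ hqv) ?_
  rw [← h.fiberCubic_eq, fiberCubic]
  nlinarith [pow_pos hs 3]

-- `fiberCubic s (-4) = 16(1 - s)(5 - s)`
theorem first_lt_neg_four (h : IsFiberRootTriple s a b c) (hs : s ∈ Ioo 0 1) : a < -4 :=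
  (h.mem_Ioo_of_fiberCubic_pos hs.1 (by linarith [hs.2])
    (by rw [fiberCubic]; nlinarith [hs.1, hs.2])).1

-- `fiberCubic s (-3 - s) = e(64 - 11e + e²)` with `e = 1 - s`
theorem neg_three_sub_lt_second (h : IsFiberRootTriple s a b c) (hs : s ∈ Ioo 0 1) :
    -3 - s < b :=
  (h.mem_Ioo_of_fiberCubic_pos hs.1 (by linarith [hs.2])
    (by rw [fiberCubic]; nlinarith [mul_pos hs.1 (sub_pos.2 hs.2)])).2

theorem third_neg (h : IsFiberRootTriple s a b c) (hs : 0 < s) : c < 0 := by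
  by_contra! hc
  have := h.root₃
  rw [fiberCubic] at this
  nlinarith [pow_pos hs 2]

theorem fiberIntegrand_eq (h : IsFiberRootTriple s a b c) :
    fiberIntegrand s = fun x => (√((x - a) * (x - b) * (c - x)))⁻¹ := by
  funext x
  rw [fiberIntegrand, h.fiberCubic_eq, one_div]
  congr 2
  ring

theorem intervalIntegrable (h : IsFiberRootTriple s a b c) :
    IntervalIntegrable (fiberIntegrand s) volume b c :=
  h.fiberIntegrand_eq ▸ intervalIntegrable_inv_sqrt_cubic h.lt₁₂ h.lt₂₃.le

theorem integral_pos (h : IsFiberRootTriple s a b c) : 0 < ∫ x in b..c, fiberIntegrand s x :=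
  h.fiberIntegrand_eq ▸ integral_inv_sqrt_cubic_pos h.lt₁₂ h.lt₂₃

theorem integral_le (h : IsFiberRootTriple s a b c) (hs : s ∈ Ioo 0 1) :
    ∫ x in b..c, fiberIntegrand s x ≤ 4 / √(1 - s) := by
  have hgap : 1 - s < b - a := by
    linarith [h.first_lt_neg_four hs, h.neg_three_sub_lt_second hs]
  calc ∫ x in b..c, fiberIntegrand s x ≤ 4 / √(b - a) :=
        h.fiberIntegrand_eq ▸ integral_inv_sqrt_cubic_le h.lt₁₂ h.lt₂₃
    _ ≤ 4 / √(1 - s) := by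
        have := Real.sqrt_pos.2 (sub_pos.2 hs.2)
        gcongr

theorem integral_eq_setIntegral_Ioo (h : IsFiberRootTriple s a b c) (hs : s ∈ Ioo 0 1) :
    ∫ x in b..c, fiberIntegrand s x = ∫ x in Ioo (-4) 0, fiberIntegrand s x := by
  have ha := h.first_lt_neg_four hs
  have hb := h.neg_three_sub_lt_second hs
  rw [integral_of_le h.lt₂₃.le, integral_Ioc_eq_integral_Ioo]
  refine (setIntegral_eq_of_subset_of_forall_sdiff_eq_zero measurableSet_Ioo
    (Ioo_subset_Ioo (by linarith [hs.2]) (h.third_neg hs.1).le) fun x ⟨hx, hxbc⟩ => ?_).symm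
  have hq : 0 ≤ fiberCubic s x := by
    rw [mem_Ioo, not_and_or, not_lt, not_lt] at hxbc
    have hxa : 0 < x - a := by linarith [hx.1]
    rw [h.fiberCubic_eq]
    rcases hxbc with hxb | hcx
    · exact mul_nonneg_of_nonpos_of_nonpos (mul_nonpos_of_nonneg_of_nonpos hxa.le (by linarith))
        (by linarith [h.lt₂₃])
    · exact mul_nonneg (mul_nonneg hxa.le (by linarith [h.lt₂₃])) (by linarith)
  rw [fiberIntegrand, Real.sqrt_eq_zero'.2 (neg_nonpos.2 hq), div_zero]

end IsFiberRootTriple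

theorem stronglyMeasurable_setIntegral_fiberIntegrand (S : Set ℝ) :
    StronglyMeasurable fun s => ∫ x in S, fiberIntegrand s x :=
  StronglyMeasurable.integral_prod_right
    (show Measurable (Function.uncurry fiberIntegrand) by
      unfold fiberIntegrand fiberCubic; fun_prop).stronglyMeasurable

theorem aestronglyMeasurable_integral_fiberIntegrand {σ r₁ r₂ r₃ : ℝ → ℝ} {T : Set ℝ}
    (hT : MeasurableSet T) (hσ : Measurable σ) (hσT : ∀ t ∈ T, σ t ∈ Ioo 0 1)
    (hR : ∀ t ∈ T, IsFiberRootTriple (σ t) (r₁ t) (r₂ t) (r₃ t)) :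
    AEStronglyMeasurable (fun t => ∫ x in r₂ t..r₃ t, fiberIntegrand (σ t) x)
      (volume.restrict T) := by
  refine ((stronglyMeasurable_setIntegral_fiberIntegrand (Ioo (-4) 0)).comp_measurable
    hσ).aestronglyMeasurable.congr ?_
  filter_upwards [ae_restrict_mem hT] with t ht
  exact ((hR t ht).integral_eq_setIntegral_Ioo (hσT t ht)).symm

theorem integrableOn_Ioo_of_norm_le_inv_sqrt_one_sub {f : ℝ → ℝ} {C : ℝ}
    (hf : AEStronglyMeasurable f (volume.restrict (Ioo 0 1)))
    (hle : ∀ t ∈ Ioo (0 : ℝ) 1, ‖f t‖ ≤ C * (√(1 - t))⁻¹) : IntegrableOn f (Ioo 0 1) :=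
  (((intervalIntegrable_inv_sqrt_sub_left zero_le_one).1.mono_set Ioo_subset_Ioc_self).const_mul
    C).mono' hf ((ae_restrict_iff' measurableSet_Ioo).2 (ae_of_all _ hle))

theorem period_integral_Gamma_pos_general (l j : ℕ) (hl : 1 ≤ l)
    (r₁ r₂ r₃ : ℝ → ℝ)
    (hlt : ∀ t ∈ Set.Ioo (0 : ℝ) 1, r₁ t < r₂ t ∧ r₂ t < r₃ t)
    (hroot : ∀ t ∈ Set.Ioo (0 : ℝ) 1, ∀ r ∈ ({r₁ t, r₂ t, r₃ t} : Set ℝ),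
      r ^ 3 + 9 * r ^ 2 + 24 * t ^ l * r + 16 * t ^ (2 * l) = 0)
    (Q : ℝ → ℝ)
    (hQ : ∀ t, Q t = ∫ x in (r₂ t)..(r₃ t),
      1 / Real.sqrt (-(x ^ 3 + 9 * x ^ 2 + 24 * t ^ l * x + 16 * t ^ (2 * l)))) :
    (∀ t ∈ Set.Ioo (0 : ℝ) 1,
      IntervalIntegrable
        (fun x => 1 / Real.sqrt (-(x ^ 3 + 9 * x ^ 2 + 24 * t ^ l * x + 16 * t ^ (2 * l))))
        volume (r₂ t) (r₃ t) ∧ 0 < Q t) ∧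
    IntegrableOn (fun t => t ^ (j - 1) * Q t) (Set.Ioo (0 : ℝ) 1) volume ∧
    0 < ∫ t in Set.Ioo (0 : ℝ) 1, t ^ (j - 1) * Q t := by
  have hfib (t : ℝ) : (fun x => 1 / √(-(x ^ 3 + 9 * x ^ 2 + 24 * t ^ l * x + 16 * t ^ (2 * l))))
      = fiberIntegrand (t ^ l) := by
    funext x
    rw [fiberIntegrand, fiberCubic, pow_mul']
  have hQ' (t : ℝ) : Q t = ∫ x in r₂ t..r₃ t, fiberIntegrand (t ^ l) x := by rw [hQ, hfib]
  have hs (t : ℝ) (ht : t ∈ Ioo (0 : ℝ) 1) : t ^ l ∈ Ioo 0 1 :=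
    ⟨pow_pos ht.1 l, pow_lt_one₀ ht.1.le ht.2 (by omega)⟩
  have hR (t : ℝ) (ht : t ∈ Ioo (0 : ℝ) 1) : IsFiberRootTriple (t ^ l) (r₁ t) (r₂ t) (r₃ t) := by
    have hq (r) (hr : r ∈ ({r₁ t, r₂ t, r₃ t} : Set ℝ)) : fiberCubic (t ^ l) r = 0 := by
      rw [fiberCubic, ← pow_mul']
      exact hroot t ht r hr
    exact ⟨(hlt t ht).1, (hlt t ht).2, hq _ (by simp), hq _ (by simp), hq _ (by simp)⟩
  have hQpos (t : ℝ) (ht : t ∈ Ioo (0 : ℝ) 1) : 0 < Q t := hQ' t ▸ (hR t ht).integral_pos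
  have hbound (t : ℝ) (ht : t ∈ Ioo (0 : ℝ) 1) : ‖t ^ (j - 1) * Q t‖ ≤ 4 * (√(1 - t))⁻¹ := by
    have htl : t ^ l ≤ t := pow_le_of_le_one ht.1.le ht.2.le (by omega)
    have := Real.sqrt_pos.2 (sub_pos.2 ht.2)
    rw [Real.norm_of_nonneg (mul_pos (pow_pos ht.1 _) (hQpos t ht)).le, ← div_eq_mul_inv]
    calc t ^ (j - 1) * Q t ≤ Q t :=
          mul_le_of_le_one_left (hQpos t ht).le (pow_le_one₀ ht.1.le ht.2.le)
      _ ≤ 4 / √(1 - t ^ l) := hQ' t ▸ (hR t ht).integral_le (hs t ht)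
      _ ≤ 4 / √(1 - t) := by gcongr
  have hQmeas := (aestronglyMeasurable_integral_fiberIntegrand measurableSet_Ioo
    (measurable_id.pow_const l) hs hR).congr (ae_of_all _ fun t => (hQ' t).symm)
  have hint := integrableOn_Ioo_of_norm_le_inv_sqrt_one_sub
    ((continuous_pow (j - 1)).aestronglyMeasurable.mul hQmeas) hbound
  refine ⟨fun t ht => ⟨hfib t ▸ (hR t ht).intervalIntegrable, hQpos t ht⟩, hint, ?_⟩
  rw [← integral_Ioc_eq_integral_Ioo, ← integral_of_le zero_le_one]
  exact intervalIntegral_pos_of_pos_on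
    ((intervalIntegrable_iff_integrableOn_Ioo_of_le zero_le_one).2 hint)
    (fun t ht => mul_pos (pow_pos ht.1 _) (hQpos t ht)) one_pos

/-- Let `l, j ≥ 1` and for `t ∈ (0,1)` let `r₁(t) < r₂(t) < r₃(t)` be the three real roots of
`q_t(x) = x³ + 9x² + 24tˡx + 16t^{2l}`.  Then (i) the improper integral
`Q(t) = ∫_{r₂(t)}^{r₃(t)} dx/√(-q_t(x))` converges to a positive real number for each
`t ∈ (0,1)`; (ii) `t ↦ t^{j-1} Q(t)` is integrable on `(0,1)`; and (iii)
`∫₀¹ t^{j-1} Q(t) dt > 0`. -/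
theorem period_integral_Gamma_pos (l j : ℕ) (hl : 1 ≤ l) (hj : 1 ≤ j)
    (r₁ r₂ r₃ : ℝ → ℝ)
    (hlt : ∀ t ∈ Set.Ioo (0 : ℝ) 1, r₁ t < r₂ t ∧ r₂ t < r₃ t)
    (hroot : ∀ t ∈ Set.Ioo (0 : ℝ) 1, ∀ r ∈ ({r₁ t, r₂ t, r₃ t} : Set ℝ),
      r ^ 3 + 9 * r ^ 2 + 24 * t ^ l * r + 16 * t ^ (2 * l) = 0)
    (hall : ∀ t ∈ Set.Ioo (0 : ℝ) 1, ∀ x : ℝ,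
      x ^ 3 + 9 * x ^ 2 + 24 * t ^ l * x + 16 * t ^ (2 * l) = 0 →
        x = r₁ t ∨ x = r₂ t ∨ x = r₃ t)
    (Q : ℝ → ℝ)
    (hQ : ∀ t, Q t = ∫ x in (r₂ t)..(r₃ t),
      1 / Real.sqrt (-(x ^ 3 + 9 * x ^ 2 + 24 * t ^ l * x + 16 * t ^ (2 * l)))) :
    (∀ t ∈ Set.Ioo (0 : ℝ) 1,
      IntervalIntegrable
        (fun x => 1 / Real.sqrt (-(x ^ 3 + 9 * x ^ 2 + 24 * t ^ l * x + 16 * t ^ (2 * l))))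
        volume (r₂ t) (r₃ t) ∧ 0 < Q t) ∧
    IntegrableOn (fun t => t ^ (j - 1) * Q t) (Set.Ioo (0 : ℝ) 1) volume ∧
    0 < ∫ t in Set.Ioo (0 : ℝ) 1, t ^ (j - 1) * Q t :=
  period_integral_Gamma_pos_general l j hl r₁ r₂ r₃ hlt hroot Q hQ
end
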